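/- For every N ∈ ℕ, the set A = {p ≤ N : p prime} ∪ {p² : p prime, p ≤ N^{1/2}} is a subset of [N] with distinct subset products; consequently f(N) ≥ π(N) + π(N^{1/2}). -/
import Mathlib


/-- A set of positive integers has *distinct subset products* if any two distinct
finite subsets have distinct products (the empty product is `1`). -/
def DistinctSubsetProds (A : Set ℕ) : Prop :=
  ∀ B C : Finset ℕ, ↑B ⊆ A → ↑C ⊆ A → ∏ b ∈ B, b = ∏ c ∈ C, c → B = C

/-- `primePi x` is the number of primes `p` with `(p : ℝ) ≤ x`. -/
noncomputable def primePi (x : ℝ) : ℕ := {p : ℕ | p.Prime ∧ (p : ℝ) ≤ x}.ncard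

/-- `maxDSP N` is the size of the largest subset of `{1, …, N}` with distinct
subset products. -/
noncomputable def maxDSP (N : ℕ) : ℕ :=
  sSup {k | ∃ A : Finset ℕ, ↑A ⊆ Set.Icc 1 N ∧ DistinctSubsetProds ↑A ∧ A.card = k}


/-- Erdős' example: primes up to `N` together with squares of primes up to `N^{1/2}`. -/
def erdosExample (N : ℕ) : Set ℕ :=
  {n : ℕ | (n.Prime ∧ n ≤ N) ∨
    ∃ p : ℕ, p.Prime ∧ (p : ℝ) ≤ (N : ℝ) ^ ((1 : ℝ) / 2) ∧ n = p ^ 2}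

-- Auxiliary lemmas
lemma factorization_elem {N n : ℕ} (h : n ∈ erdosExample N) (p : ℕ) (hp : p.Prime) :
    n.factorization p = (if n = p then 1 else 0) + (if n = p ^ 2 then 2 else 0) := by
  have hsq : ∀ r q : ℕ, r.Prime → r ≠ q ^ 2 := by
    intro r q hr he
    subst he
    rcases eq_or_ne q 1 with h1 | h1
    · subst h1; norm_num at hr
    · rw [pow_two] at hr; exact Nat.not_prime_mul h1 h1 hr
  rcases h with ⟨hq, -⟩ | ⟨q, hq, -, rfl⟩
  · rw [hq.factorization]
    by_cases h1 : n = p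
    · subst h1; simp [hsq n n hq]
    · simp [h1, hsq n p hq, Finsupp.single_apply, Ne.symm h1]
  · rw [Nat.factorization_pow, hq.factorization]
    have h2 : q ^ 2 ≠ p := fun he => hsq p q hp he.symm
    by_cases h1 : q = p
    · subst h1; simp [h2]
    · have : q ^ 2 ≠ p ^ 2 := fun he => h1 (Nat.pow_left_injective (by norm_num) he)
      simp [h2, this, Finsupp.single_apply, h1, Ne.symm h1]

lemma erdos_pos {N n : ℕ} (h : n ∈ erdosExample N) : n ≠ 0 := by
  rcases h with ⟨hq, -⟩ | ⟨q, hq, -, rfl⟩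
  · exact hq.ne_zero
  · exact pow_ne_zero 2 hq.ne_zero

lemma prod_fact {N : ℕ} (B : Finset ℕ) (hB : ↑B ⊆ erdosExample N) (p : ℕ) (hp : p.Prime) :
    (∏ b ∈ B, b).factorization p =
      (if p ∈ B then 1 else 0) + (if p ^ 2 ∈ B then 2 else 0) := by
  have hne : ∀ b ∈ B, b ≠ 0 := fun b hb => erdos_pos (hB hb)
  rw [Nat.factorization_prod hne]
  rw [Finset.sum_apply']
  have : ∀ b ∈ B, (Nat.factorization b) p
      = (if b = p then 1 else 0) + (if b = p ^ 2 then 2 else 0) := by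
    intro b hb; exact factorization_elem (hB hb) p hp
  rw [Finset.sum_congr rfl this, Finset.sum_add_distrib,
    Finset.sum_ite_eq' B p (fun _ => 1), Finset.sum_ite_eq' B (p ^ 2) (fun _ => 2)]

lemma dsp_half {N : ℕ} (B C : Finset ℕ) (hB : ↑B ⊆ erdosExample N) (hC : ↑C ⊆ erdosExample N)
    (hprod : ∏ b ∈ B, b = ∏ c ∈ C, c) : B ⊆ C := by
  intro n hn
  have key : ∀ p : ℕ, p.Prime →
      (if p ∈ B then 1 else 0) + (if p ^ 2 ∈ B then 2 else 0)
      = (if p ∈ C then 1 else 0) + (if p ^ 2 ∈ C then 2 else 0) := by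
    intro p hp
    rw [← prod_fact B hB p hp, ← prod_fact C hC p hp, hprod]
  rcases hB hn with ⟨hq, -⟩ | ⟨q, hq, -, rfl⟩
  · have := key n hq
    by_contra hnc
    simp only [hn, hnc, if_true, if_false] at this
    split_ifs at this <;> omega
  · have := key q hq
    by_contra hnc
    simp only [hn, hnc, if_true, if_false] at this
    split_ifs at this <;> omega

lemma dsp (N : ℕ) : ∀ B C : Finset ℕ, ↑B ⊆ erdosExample N → ↑C ⊆ erdosExample N →
    ∏ b ∈ B, b = ∏ c ∈ C, c → B = C :=
  fun B C hB hC h =>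
    Finset.Subset.antisymm (dsp_half B C hB hC h) (dsp_half C B hC hB h.symm)

lemma prime_ne_sq {r q : ℕ} (hr : r.Prime) : r ≠ q ^ 2 := by
  intro he
  subst he
  rcases eq_or_ne q 1 with h1 | h1
  · subst h1; norm_num at hr
  · rw [pow_two] at hr; exact Nat.not_prime_mul h1 h1 hr

lemma erdos_sub (N : ℕ) : erdosExample N ⊆ Set.Icc 1 N := by
  rintro n (⟨hq, hle⟩ | ⟨p, hp, hple, rfl⟩)
  · exact ⟨hq.one_lt.le, hle⟩
  · refine ⟨Nat.one_le_iff_ne_zero.mpr (pow_ne_zero 2 hp.ne_zero), ?_⟩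
    have h0 : (0:ℝ) ≤ (N:ℝ) := Nat.cast_nonneg N
    have h1 : ((p:ℝ))^(2:ℕ) ≤ ((N:ℝ)^((1:ℝ)/2))^(2:ℕ) :=
      pow_le_pow_left₀ (Nat.cast_nonneg p) hple 2
    rw [← Real.rpow_natCast ((N:ℝ)^((1:ℝ)/2)) 2, ← Real.rpow_mul h0] at h1
    norm_num at h1
    exact_mod_cast h1

lemma sqrt_le (N : ℕ) {p : ℕ} (hp : (p:ℝ) ≤ (N:ℝ)^((1:ℝ)/2)) : p ≤ N := by
  have hxle : (N:ℝ)^((1:ℝ)/2) ≤ (N:ℝ) := by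
    rcases Nat.eq_zero_or_pos N with h | h
    · simp [h, Real.zero_rpow (by norm_num : (1:ℝ)/2 ≠ 0)]
    · calc (N:ℝ)^((1:ℝ)/2) ≤ (N:ℝ)^(1:ℝ) :=
            Real.rpow_le_rpow_of_exponent_le (by exact_mod_cast h) (by norm_num)
        _ = N := Real.rpow_one _
  exact_mod_cast hp.trans hxle

lemma card_bound (N : ℕ) :
    ∃ E : Finset ℕ, ↑E = erdosExample N ∧
      E.card = primePi N + primePi ((N:ℝ)^((1:ℝ)/2)) := by
  classical
  set x := (N:ℝ)^((1:ℝ)/2) with hx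
  let P1 : Finset ℕ := (Finset.range (N+1)).filter Nat.Prime
  let P2 : Finset ℕ := (Finset.range (N+1)).filter (fun p => p.Prime ∧ (p:ℝ) ≤ x)
  have hP1 : (↑P1 : Set ℕ) = {p : ℕ | p.Prime ∧ (p:ℝ) ≤ (N:ℝ)} := by
    ext p
    simp only [P1, Finset.coe_filter, Finset.mem_range, Set.mem_setOf_eq, Nat.lt_succ_iff,
      Nat.cast_le]
    tauto
  have hP2 : (↑P2 : Set ℕ) = {p : ℕ | p.Prime ∧ (p:ℝ) ≤ x} := by
    ext p
    simp only [P2, Finset.coe_filter, Finset.mem_range, Set.mem_setOf_eq, Nat.lt_succ_iff]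
    exact ⟨fun h => h.2, fun h => ⟨sqrt_le N h.2, h⟩⟩
  refine ⟨P1 ∪ P2.image (· ^ 2), ?_, ?_⟩
  · ext n
    simp only [Finset.coe_union, Set.mem_union, Finset.coe_image, Set.mem_image, hP1, hP2,
      Set.mem_setOf_eq, erdosExample]
    constructor
    · rintro (⟨h1, h2⟩ | ⟨p, ⟨hp, hpx⟩, rfl⟩)
      · exact Or.inl ⟨h1, by exact_mod_cast h2⟩
      · exact Or.inr ⟨p, hp, hpx, rfl⟩
    · rintro (⟨h1, h2⟩ | ⟨p, hp, hpx, rfl⟩)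
      · exact Or.inl ⟨h1, by exact_mod_cast h2⟩
      · exact Or.inr ⟨p, ⟨hp, hpx⟩, rfl⟩
  · have hinj : Function.Injective (· ^ 2 : ℕ → ℕ) :=
      Nat.pow_left_injective (by norm_num)
    have hdisj : Disjoint P1 (P2.image (· ^ 2)) := by
      rw [Finset.disjoint_left]
      rintro a ha hb
      obtain ⟨q, -, rfl⟩ := Finset.mem_image.mp hb
      exact prime_ne_sq (Finset.mem_filter.mp ha).2 rfl
    rw [Finset.card_union_of_disjoint hdisj, Finset.card_image_of_injective _ hinj]
    congr 1
    · rw [primePi, ← hP1, Set.ncard_coe_finset]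
    · rw [primePi, ← hP2, Set.ncard_coe_finset]

/-- The set `{p ≤ N : p prime} ∪ {p² : p prime, p ≤ N^{1/2}}` is a subset of `[N]` with
distinct subset products; consequently `f(N) ≥ π(N) + π(N^{1/2})`. -/
theorem stmt16 (N : ℕ) :
    erdosExample N ⊆ Set.Icc 1 N ∧ DistinctSubsetProds (erdosExample N) ∧
      primePi N + primePi ((N : ℝ) ^ ((1 : ℝ) / 2)) ≤ maxDSP N := by
  refine ⟨erdos_sub N, dsp N, ?_⟩
  obtain ⟨E, hE, hcard⟩ := card_bound N
  rw [← hcard]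
  apply le_csSup
  · refine ⟨N, ?_⟩
    rintro k ⟨A, hA, -, rfl⟩
    have hsub : A ⊆ Finset.Icc 1 N := fun a ha =>
      Finset.mem_Icc.mpr (hA (Finset.mem_coe.mpr ha))
    calc A.card ≤ (Finset.Icc 1 N).card := Finset.card_le_card hsub
      _ = N := by rw [Nat.card_Icc]; omega
  · refine ⟨E, ?_, ?_, rfl⟩
    · rw [hE]; exact erdos_sub N
    · rw [hE]; exact dsp N
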